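/- arXiv:2403.08537 — 3 statements merged into one kernel-verified Lean document; each statement's English description precedes it below -/
import Mathlib

section
/- Let A, B be subsets of {1,…,n}, let P ⊆ {i ∈ A ∩ B : u_i > 2}, and set Q = {i ∈ A ∩ B : u_i > 2} \ P. Let y, z ∈ X with D(y,z) = (A Δ B) ∪ P. Then the number of w ∈ X with D(w,y) = A and D(w,z) = B equals ∏_{i∈P}(u_i − 2) · ∏_{i∈Q}(u_i − 1) (empty products equal 1). In particular this number is nonzero. -/
/-!
A point `w` satisfies `D(w, y) = A` and `D(w, z) = B` iff, in every coordinate `i`, `w i`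
differs from `y i` exactly when `i ∈ A` and from `z i` exactly when `i ∈ B`; so these points
form a box whose side in coordinate `i` is counted separately. On `P` the side is `U i` minus
the two distinct values `y i, z i`; on the rest of `A ∩ B` it is `U i` minus the common value
`y i = z i`; off `A ∩ B` the constraints pin `w i` down to a single value.
-/

open Finset

section Coordinate

variable {α : Type*} [Fintype α] [DecidableEq α]

theorem card_filter_ne_and_ne (b c : α) :
    #{a | a ≠ b ∧ a ≠ c} = Fintype.card α - #{b, c} := by
  rw [← card_compl]
  congr 1
  ext a
  simp

theorem card_filter_ne_iff_and_ne_iff_eq_one {b c : α} {p q : Prop} [Decidable p]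
    [Decidable q] (hpq : ¬(p ∧ q)) (hbc : b ≠ c ↔ p ∨ q) :
    #{a | (a ≠ b ↔ p) ∧ (a ≠ c ↔ q)} = 1 := by
  rw [card_eq_one]
  by_cases hp : p
  · have hq : ¬q := fun hq => hpq ⟨hp, hq⟩
    refine ⟨c, ?_⟩
    ext a
    simp only [mem_filter, mem_univ, true_and, mem_singleton, hp, hq, iff_true, iff_false,
      not_not]
    exact ⟨And.right, fun h => ⟨h ▸ (hbc.mpr (Or.inl hp)).symm, h⟩⟩
  · refine ⟨b, ?_⟩
    ext a
    by_cases hq : q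
    · simp only [mem_filter, mem_univ, true_and, mem_singleton, hp, hq, iff_true,
        iff_false, not_not]
      exact ⟨And.left, fun h => ⟨h, h ▸ hbc.mpr (Or.inr hq)⟩⟩
    · have hbc' : b = c := by simpa [hp, hq] using hbc
      simp [hp, hq, hbc']

end Coordinate

section Box

variable {ι : Type*} [Fintype ι] [DecidableEq ι] {U : ι → Type*} [∀ i, Fintype (U i)]
  [∀ i, DecidableEq (U i)]

theorem card_filter_diff_eq_and_diff_eq (y z : ∀ i, U i) (A B : Finset ι) :
    #{w : ∀ i, U i | ({i | w i ≠ y i} : Finset ι) = A ∧ ({i | w i ≠ z i} : Finset ι) = B}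
      = ∏ i, #{a : U i | (a ≠ y i ↔ i ∈ A) ∧ (a ≠ z i ↔ i ∈ B)} := by
  rw [← Fintype.card_piFinset]
  congr 1
  ext w
  simp only [mem_filter, mem_univ, true_and, Fintype.mem_piFinset, Finset.ext_iff]
  exact ⟨fun ⟨hA, hB⟩ i => ⟨hA i, hB i⟩, fun h => ⟨fun i => (h i).1, fun i => (h i).2⟩⟩

theorem card_coordinate_fiber {u : ι → ℕ} (hu : ∀ i, Fintype.card (U i) = u i)
    (h2 : ∀ i, 2 ≤ u i) {A B P Q : Finset ι} (hP : P ⊆ {i ∈ A ∩ B | 2 < u i})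
    (hQ : Q = {i ∈ A ∩ B | 2 < u i} \ P) {y z : ∀ i, U i}
    (hyz : ({i | y i ≠ z i} : Finset ι) = symmDiff A B ∪ P) (i : ι) :
    #{a : U i | (a ≠ y i ↔ i ∈ A) ∧ (a ≠ z i ↔ i ∈ B)}
      = (if i ∈ P then u i - 2 else 1) * (if i ∈ Q then u i - 1 else 1) := by
  have hyz_i : y i ≠ z i ↔ i ∈ symmDiff A B ∨ i ∈ P := by
    simpa using Finset.ext_iff.mp hyz i
  by_cases hiP : i ∈ P
  · obtain ⟨⟨hiA, hiB⟩, -⟩ : (i ∈ A ∧ i ∈ B) ∧ 2 < u i := by simpa using hP hiP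
    have hiQ : i ∉ Q := by simp [hQ, hiP]
    rw [if_pos hiP, if_neg hiQ, mul_one, ← hu,
      ← card_pair_eq_two_iff.mpr (hyz_i.mpr (.inr hiP))]
    simpa [hiA, hiB] using card_filter_ne_and_ne (y i) (z i)
  by_cases hiAB : i ∈ A ∧ i ∈ B
  · have hyz_eq : y i = z i := by
      simpa [mem_symmDiff, hiAB, hiP] using hyz_i
    have hcard : #{a : U i | (a ≠ y i ↔ i ∈ A) ∧ (a ≠ z i ↔ i ∈ B)} = u i - 1 := by
      simpa [hiAB, ← hyz_eq, hu] using card_filter_ne_and_ne (y i) (y i)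
    rw [hcard, if_neg hiP, one_mul]
    split_ifs with hiQ
    · rfl
    · have : u i ≤ 2 := by
        by_contra! hu2
        exact hiQ (by simp [hQ, hiAB, hu2, hiP])
      have := h2 i
      omega
  · have hiQ : i ∉ Q := by simp [hQ, hiAB]
    rw [if_neg hiP, if_neg hiQ]
    refine card_filter_ne_iff_and_ne_iff_eq_one hiAB ?_
    rw [hyz_i, mem_symmDiff]
    tauto

end Box

theorem stmt_2_general {n : ℕ} (U : Fin n → Type*) [∀ i, Fintype (U i)]
    [∀ i, DecidableEq (U i)] (u : Fin n → ℕ) (hu : ∀ i, Fintype.card (U i) = u i)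
    (h2 : ∀ i, 2 ≤ u i) (A B P Q : Finset (Fin n))
    (hP : P ⊆ (A ∩ B).filter (fun i => 2 < u i))
    (hQ : Q = (A ∩ B).filter (fun i => 2 < u i) \ P)
    (y z : ∀ i, U i)
    (hyz : univ.filter (fun i => y i ≠ z i) = symmDiff A B ∪ P) :
    ((univ : Finset (∀ i, U i)).filter
        (fun w => univ.filter (fun i => w i ≠ y i) = A ∧
          univ.filter (fun i => w i ≠ z i) = B)).card
      = (∏ i ∈ P, (u i - 2)) * ∏ i ∈ Q, (u i - 1) ∧
    0 < ((univ : Finset (∀ i, U i)).filter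
        (fun w => univ.filter (fun i => w i ≠ y i) = A ∧
          univ.filter (fun i => w i ≠ z i) = B)).card := by
  rw [card_filter_diff_eq_and_diff_eq, prod_congr rfl fun i _ =>
    card_coordinate_fiber hu h2 hP hQ hyz i, prod_mul_distrib, prod_ite_mem, prod_ite_mem,
    univ_inter, univ_inter]
  refine ⟨rfl, Nat.mul_pos (prod_pos fun i hi => ?_) (prod_pos fun i _ => ?_)⟩
  · have : 2 < u i := (mem_filter.mp (hP hi)).2
    omega
  · have := h2 i
    omega

theorem stmt_2 {n : ℕ} (hn : 1 ≤ n) (U : Fin n → Type*) [∀ i, Fintype (U i)]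
    [∀ i, DecidableEq (U i)] (u : Fin n → ℕ) (hu : ∀ i, Fintype.card (U i) = u i)
    (h2 : ∀ i, 2 ≤ u i) (A B P Q : Finset (Fin n))
    (hP : P ⊆ (A ∩ B).filter (fun i => 2 < u i))
    (hQ : Q = (A ∩ B).filter (fun i => 2 < u i) \ P)
    (y z : ∀ i, U i)
    (hyz : univ.filter (fun i => y i ≠ z i) = symmDiff A B ∪ P) :
    ((univ : Finset (∀ i, U i)).filter
        (fun w => univ.filter (fun i => w i ≠ y i) = A ∧
          univ.filter (fun i => w i ≠ z i) = B)).card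
      = (∏ i ∈ P, (u i - 2)) * ∏ i ∈ Q, (u i - 1) ∧
    0 < ((univ : Finset (∀ i, U i)).filter
        (fun w => univ.filter (fun i => w i ≠ y i) = A ∧
          univ.filter (fun i => w i ≠ z i) = B)).card :=
  stmt_2_general U u hu h2 A B P Q hP hQ y z hyz
end

section
/- Let u : {1,…,n} → ℕ with u_x ≥ 2 for all x, let Q(S) = {x ∈ S : u_x > 2}, and let n₂ = |{x : u_x > 2}|. Then the number of triples (A, B, C) of subsets of {1,…,n} satisfying A Δ B ⊆ C ⊆ (A Δ B) ∪ Q(A ∩ B) equals ∑_{g=0}^{n₂} ∑_{h=0}^{n−n₂} ∑_{i=0}^{g} ∑_{j=0}^{h} C(n₂,g)·C(n−n₂,h)·C(g,i)·C(h,j)·2^{n−g−h+i}. -/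
/-!
Both sides equal `5 ^ n₂ * 4 ^ (n - n₂)`. The two inclusions constrain each element separately:
`x ∈ C` must agree with `x ∈ A ∆ B`, except that `x ∈ C` is free when `x ∈ A ∩ B` and `u x > 2`.
So an element with `u x > 2` has 5 admissible membership patterns and any other element 4.
On the other side, the sums over `j` and `i` collapse to `2 ^ h` and `3 ^ g`, and the remaining
double sum factors into the binomial expansions of `(3 + 2) ^ n₂` and `(2 + 2) ^ (n - n₂)`.
-/

open Finset

namespace Finset

variable {α : Type*} [Fintype α] [DecidableEq α]

def tripleEquivPiBool : Finset α × Finset α × Finset α ≃ (α → Bool × Bool × Bool) where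
  toFun t x := (x ∈ t.1, x ∈ t.2.1, x ∈ t.2.2)
  invFun f := (({x | (f x).1} : Finset α), ({x | (f x).2.1} : Finset α),
    ({x | (f x).2.2} : Finset α))
  left_inv t := by ext <;> simp
  right_inv f := by ext x <;> simp

theorem card_filter_forall_mem_eq_prod (P : α → Bool × Bool × Bool → Bool) :
    #{t : Finset α × Finset α × Finset α | ∀ x, P x (x ∈ t.1, x ∈ t.2.1, x ∈ t.2.2)} =
      ∏ x, #{b | P x b} := by
  simp only [← Fintype.card_subtype, ← Fintype.card_pi]
  exact Fintype.card_congr <| (Equiv.subtypeEquiv tripleEquivPiBool fun _ => Iff.rfl).trans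
    (Equiv.subtypePiEquivPi (β := fun _ => Bool × Bool × Bool) (p := fun x b => P x b))

/-- The membership bits `(x ∈ A, x ∈ B, x ∈ C)` allowed for one element `x` in
`A ∆ B ⊆ C ⊆ A ∆ B ∪ {x ∈ A ∩ B | p x}`, where `q = p x`. -/
def sandwichAdmissible (q : Bool) (b : Bool × Bool × Bool) : Bool :=
  b.2.2 == xor b.1 b.2.1 || b.1 && b.2.1 && q

theorem card_sandwichAdmissible (q : Bool) :
    #{b | sandwichAdmissible q b} = if q then 5 else 4 := by
  cases q <;> decide

omit [Fintype α] in
theorem symmDiff_subset_and_subset_iff (p : α → Prop) [DecidablePred p] (A B C : Finset α) :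
    symmDiff A B ⊆ C ∧ C ⊆ symmDiff A B ∪ {x ∈ A ∩ B | p x} ↔
      ∀ x, sandwichAdmissible (p x) (x ∈ A, x ∈ B, x ∈ C) := by
  simp only [subset_iff, ← forall_and]
  refine forall_congr' fun x => ?_
  by_cases hA : x ∈ A <;> by_cases hB : x ∈ B <;> by_cases hC : x ∈ C <;>
    simp [sandwichAdmissible, hA, hB, hC, mem_symmDiff]

theorem card_symmDiff_subset_subset (p : α → Prop) [DecidablePred p] :
    #{t : Finset α × Finset α × Finset α | symmDiff t.1 t.2.1 ⊆ t.2.2 ∧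
        t.2.2 ⊆ symmDiff t.1 t.2.1 ∪ {x ∈ t.1 ∩ t.2.1 | p x}} =
      5 ^ #{x | p x} * 4 ^ #{x | ¬p x} := by
  simp_rw [symmDiff_subset_and_subset_iff, card_filter_forall_mem_eq_prod,
    card_sandwichAdmissible, decide_eq_true_eq]
  rw [prod_ite, prod_const, prod_const]

end Finset

theorem sum_choose_mul_two_pow (g : ℕ) : ∑ i ∈ range (g + 1), g.choose i * 2 ^ i = 3 ^ g := by
  rw [show 3 = 2 + 1 by rfl, add_pow]
  simp [mul_comm]

theorem sum_sum_choose_mul_two_pow {N M g h : ℕ} (hg : g ≤ N) (hh : h ≤ M) :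
    ∑ i ∈ range (g + 1), ∑ j ∈ range (h + 1),
        N.choose g * M.choose h * g.choose i * h.choose j * 2 ^ (N + M - g - h + i) =
      (3 ^ g * 2 ^ (N - g) * N.choose g) * (2 ^ h * 2 ^ (M - h) * M.choose h) := by
  have hexp : N + M - g - h = (N - g) + (M - h) := by omega
  calc _ = ∑ i ∈ range (g + 1), ∑ j ∈ range (h + 1),
          (N.choose g * 2 ^ (N - g) * (g.choose i * 2 ^ i)) *
            (M.choose h * 2 ^ (M - h) * h.choose j) := by
        simp only [hexp, pow_add]
        exact sum_congr rfl fun _ _ => sum_congr rfl fun _ _ => by ring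
    _ = (N.choose g * 2 ^ (N - g) * ∑ i ∈ range (g + 1), g.choose i * 2 ^ i) *
          (M.choose h * 2 ^ (M - h) * ∑ j ∈ range (h + 1), h.choose j) := by
        rw [mul_sum, mul_sum, sum_mul_sum]
    _ = _ := by
        rw [sum_choose_mul_two_pow, Nat.sum_range_choose]
        ring

theorem sum_choose_mul_choose_eq_five_pow_mul_four_pow {n N : ℕ} (hN : N ≤ n) :
    ∑ g ∈ range (N + 1), ∑ h ∈ range (n - N + 1), ∑ i ∈ range (g + 1), ∑ j ∈ range (h + 1),
        N.choose g * (n - N).choose h * g.choose i * h.choose j * 2 ^ (n - g - h + i) =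
      5 ^ N * 4 ^ (n - N) := by
  obtain ⟨M, rfl⟩ := Nat.exists_eq_add_of_le hN
  rw [Nat.add_sub_cancel_left]
  calc _ = ∑ g ∈ range (N + 1), ∑ h ∈ range (M + 1),
          (3 ^ g * 2 ^ (N - g) * N.choose g) * (2 ^ h * 2 ^ (M - h) * M.choose h) :=
        sum_congr rfl fun g hg => sum_congr rfl fun h hh =>
          sum_sum_choose_mul_two_pow (Nat.lt_succ_iff.mp (mem_range.mp hg))
            (Nat.lt_succ_iff.mp (mem_range.mp hh))
    _ = 5 ^ N * 4 ^ M := by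
        rw [← sum_mul_sum, show 5 = 3 + 2 by rfl, show 4 = 2 + 2 by rfl, add_pow, add_pow]
        simp only [Nat.cast_id]

theorem stmt_10_general {n : ℕ} (u : Fin n → ℕ)
    (n₂ : ℕ) (hn2 : n₂ = ((univ : Finset (Fin n)).filter (fun x => 2 < u x)).card) :
    ((univ : Finset (Finset (Fin n) × Finset (Fin n) × Finset (Fin n))).filter
        (fun t => symmDiff t.1 t.2.1 ⊆ t.2.2 ∧
          t.2.2 ⊆ symmDiff t.1 t.2.1 ∪ (t.1 ∩ t.2.1).filter (fun x => 2 < u x))).card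
      = ∑ g ∈ Finset.range (n₂ + 1), ∑ h ∈ Finset.range (n - n₂ + 1),
          ∑ i ∈ Finset.range (g + 1), ∑ j ∈ Finset.range (h + 1),
            n₂.choose g * (n - n₂).choose h * g.choose i * h.choose j *
              2 ^ (n - g - h + i) := by
  have hcompl : #{x : Fin n | ¬2 < u x} = n - n₂ := by
    rw [filter_not, card_sdiff_of_subset (filter_subset _ _), card_univ, Fintype.card_fin, hn2]
  have hn₂ : n₂ ≤ n := hn2 ▸ (card_le_univ _).trans_eq (Fintype.card_fin n)
  rw [card_symmDiff_subset_subset, hcompl, ← hn2,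
    sum_choose_mul_choose_eq_five_pow_mul_four_pow hn₂]

theorem stmt_10 {n : ℕ} (hn : 1 ≤ n) (u : Fin n → ℕ) (h2 : ∀ i, 2 ≤ u i)
    (n₂ : ℕ) (hn2 : n₂ = ((univ : Finset (Fin n)).filter (fun x => 2 < u x)).card) :
    ((univ : Finset (Finset (Fin n) × Finset (Fin n) × Finset (Fin n))).filter
        (fun t => symmDiff t.1 t.2.1 ⊆ t.2.2 ∧
          t.2.2 ⊆ symmDiff t.1 t.2.1 ∪ (t.1 ∩ t.2.1).filter (fun x => 2 < u x))).card
      = ∑ g ∈ Finset.range (n₂ + 1), ∑ h ∈ Finset.range (n - n₂ + 1),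
          ∑ i ∈ Finset.range (g + 1), ∑ j ∈ Finset.range (h + 1),
            n₂.choose g * (n - n₂).choose h * g.choose i * h.choose j *
              2 ^ (n - g - h + i) :=
  stmt_10_general u n₂ hn2
end

section
/- The F-dimension of the Terwilliger algebra T of the factorial scheme with parameters u_1,…,u_n equals ∑_{g=0}^{n₂} ∑_{h=0}^{n−n₂} ∑_{i=0}^{g} ∑_{j=0}^{h} C(n₂,g)·C(n−n₂,h)·C(g,i)·C(h,j)·2^{n−g−h+i}, where n₂ = |{a : u_a > 2}|. In particular, this dimension is independent of the field F. -/
open Finset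

variable {n : ℕ} {U : Fin n → Type*} [∀ i, Fintype (U i)] [∀ i, DecidableEq (U i)]
variable (F : Type*) [Field F]

/-- `D(y,z) = {i : y i ≠ z i}`. -/
def Dst (y z : ∀ i, U i) : Finset (Fin n) := univ.filter (fun i => y i ≠ z i)

/-- Adjacency matrix of the relation indexed by `S`. -/
def adjMat (S : Finset (Fin n)) : Matrix (∀ i, U i) (∀ i, U i) F :=
  fun y z => if Dst y z = S then 1 else 0

/-- Dual idempotent with respect to the base point `x`. -/
def dualIdem (x : ∀ i, U i) (S : Finset (Fin n)) : Matrix (∀ i, U i) (∀ i, U i) F :=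
  Matrix.diagonal (fun y => if Dst x y = S then 1 else 0)

/-- The Terwilliger `F`-algebra of the factorial scheme with base point `x`. -/
def TerwAlg (x : ∀ i, U i) : Subalgebra F (Matrix (∀ i, U i) (∀ i, U i) F) :=
  Algebra.adjoin F (Set.range (adjMat F) ∪ Set.range (dualIdem F x))

-- auxiliary
lemma Dst_eq_iff (y z : ∀ i, U i) (S : Finset (Fin n)) :
    Dst y z = S ↔ ∀ i, (y i ≠ z i ↔ i ∈ S) := by
  simp [Dst, Finset.ext_iff]

lemma mem_Dst {y z : ∀ i, U i} {i : Fin n} : i ∈ Dst y z ↔ y i ≠ z i := by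
  simp [Dst]

lemma Dst_eq_empty_iff (y z : ∀ i, U i) : Dst y z = ∅ ↔ y = z := by
  simp [Dst, Finset.ext_iff, funext_iff]

variable (x : ∀ i, U i)

abbrev TT (n : ℕ) := Finset (Fin n) × Finset (Fin n) × Finset (Fin n)

def Bm (t : TT n) : Matrix (∀ i, U i) (∀ i, U i) F :=
  fun y z => if Dst x y = t.1 ∧ Dst y z = t.2.1 ∧ Dst x z = t.2.2 then 1 else 0

lemma Bm_eq_mul (t : TT n) :
    Bm F x t = dualIdem F x t.1 * adjMat F t.2.1 * dualIdem F x t.2.2 := by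
  ext y z
  simp only [Bm, dualIdem, adjMat, Matrix.mul_diagonal, Matrix.diagonal_mul]
  by_cases h1 : Dst x y = t.1 <;> by_cases h2 : Dst y z = t.2.1 <;>
    by_cases h3 : Dst x z = t.2.2 <;> simp [h1, h2, h3]

set_option linter.unusedSectionVars false

def Wspan : Submodule F (Matrix (∀ i, U i) (∀ i, U i) F) :=
  Submodule.span F (Set.range (Bm F x))

lemma Bm_mem (t : TT n) : Bm F x t ∈ Wspan F x :=
  Submodule.subset_span (Set.mem_range_self t)

lemma adjMat_eq_sum (S : Finset (Fin n)) :
    adjMat F S = ∑ p : Finset (Fin n) × Finset (Fin n), Bm F x (p.1, S, p.2) := by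
  ext y z
  rw [Matrix.sum_apply]
  simp only [Bm, adjMat]
  rw [Finset.sum_eq_single (Dst x y, Dst x z)]
  · by_cases h : Dst y z = S <;> simp [h]
  · intro b _ hb
    rw [if_neg]
    rintro ⟨h1, -, h3⟩
    exact hb (Prod.ext_iff.mpr ⟨h1.symm, h3.symm⟩)
  · simp

lemma adjMat_mem (S : Finset (Fin n)) : adjMat F S ∈ Wspan F x := by
  rw [adjMat_eq_sum F x S]
  exact Submodule.sum_mem _ fun p _ => Bm_mem F x _

lemma dualIdem_eq_sum (S : Finset (Fin n)) :
    dualIdem F x S = ∑ R : Finset (Fin n), Bm F x (S, ∅, R) := by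
  ext y z
  rw [Matrix.sum_apply]
  simp only [Bm, dualIdem, Matrix.diagonal_apply]
  rw [Finset.sum_eq_single (Dst x z)]
  · by_cases hyz : y = z
    · subst hyz
      by_cases h : Dst x y = S <;> simp [h, Dst_eq_empty_iff]
    · rw [if_neg hyz, eq_comm, if_neg]
      rintro ⟨-, h2, -⟩
      exact hyz ((Dst_eq_empty_iff y z).mp h2)
  · intro b _ hb
    rw [if_neg]
    rintro ⟨-, -, h3⟩
    exact hb h3.symm
  · simp

lemma dualIdem_mem (S : Finset (Fin n)) : dualIdem F x S ∈ Wspan F x := by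
  rw [dualIdem_eq_sum F x S]
  exact Submodule.sum_mem _ fun p _ => Bm_mem F x _

lemma one_eq_sum : (1 : Matrix (∀ i, U i) (∀ i, U i) F) = ∑ S : Finset (Fin n), Bm F x (S, ∅, S) := by
  ext y z
  rw [Matrix.sum_apply]
  simp only [Bm, Matrix.one_apply]
  rw [Finset.sum_eq_single (Dst x y)]
  · by_cases hyz : y = z
    · subst hyz; simp [Dst_eq_empty_iff]
    · rw [if_neg hyz, eq_comm, if_neg]
      rintro ⟨-, h2, -⟩
      exact hyz ((Dst_eq_empty_iff y z).mp h2)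
  · intro b _ hb
    rw [if_neg]
    rintro ⟨h1, -, -⟩
    exact hb h1.symm
  · simp

lemma one_mem_W : (1 : Matrix (∀ i, U i) (∀ i, U i) F) ∈ Wspan F x := by
  rw [one_eq_sum F x]
  exact Submodule.sum_mem _ fun p _ => Bm_mem F x _

section Helpers
variable {α : Type*} [Fintype α] [DecidableEq α]

lemma card_filter_eq_and (v : α) (p : α → Prop) [DecidablePred p] :
    (univ.filter fun a => a = v ∧ p a).card = if p v then 1 else 0 := by
  have h : (univ.filter fun a => a = v ∧ p a) = if p v then {v} else ∅ := by
    split_ifs with h <;> ext a <;> simp only [mem_filter, mem_univ, true_and,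
      mem_singleton, notMem_empty, iff_false]
    · constructor
      · rintro ⟨rfl, -⟩; rfl
      · rintro rfl; exact ⟨rfl, h⟩
    · rintro ⟨rfl, hp⟩; exact h hp
  rw [h]; split_ifs <;> simp

lemma card_triple (v b c b' c' : α) (h1 : b ≠ v ↔ b' ≠ v) (h2 : b ≠ c ↔ b' ≠ c')
    (h3 : c ≠ v ↔ c' ≠ v) :
    ({v, b, c} : Finset α).card = ({v, b', c'} : Finset α).card := by
  have e1 : b = v ↔ b' = v := not_iff_not.mp h1
  have e2 : b = c ↔ b' = c' := not_iff_not.mp h2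
  have e3 : c = v ↔ c' = v := not_iff_not.mp h3
  have f1 : v = b ↔ v = b' := by rw [eq_comm, @eq_comm _ v b']; exact e1
  have f2 : v = c ↔ v = c' := by rw [eq_comm, @eq_comm _ v c']; exact e3
  show Finset.card (insert v (insert b {c})) = Finset.card (insert v (insert b' {c'}))
  rw [Finset.card_insert_eq_ite, Finset.card_insert_eq_ite,
    Finset.card_insert_eq_ite, Finset.card_insert_eq_ite]
  simp only [Finset.mem_insert, Finset.mem_singleton, Finset.card_singleton, f1, f2, e2]

lemma card_filter_not_mem_triple (v b c : α) :
    (univ.filter fun a => a ≠ v ∧ b ≠ a ∧ a ≠ c).card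
      = Fintype.card α - ({v, b, c} : Finset α).card := by
  have h : (univ.filter fun a => a ≠ v ∧ b ≠ a ∧ a ≠ c) = ({v, b, c} : Finset α)ᶜ := by
    ext a
    simp only [mem_filter, mem_univ, true_and, Finset.mem_compl, mem_insert, mem_singleton]
    constructor
    · rintro ⟨h1, h2, h3⟩ (h | h | h)
      exacts [h1 h, h2 h.symm, h3 h]
    · intro h
      exact ⟨fun h' => h (Or.inl h'), fun h' => h (Or.inr (Or.inl h'.symm)),
        fun h' => h (Or.inr (Or.inr h'))⟩
  rw [h, Finset.card_compl]

/-- The key invariance: the number of `a` with prescribed (in)equality pattern to `v, b, c`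
depends only on the mutual (in)equality pattern of `v, b, c`. -/
lemma cnt_invar (v : α) (P Q R : Prop) [Decidable P] [Decidable Q] [Decidable R]
    {b c b' c' : α} (h1 : b ≠ v ↔ b' ≠ v) (h2 : b ≠ c ↔ b' ≠ c') (h3 : c ≠ v ↔ c' ≠ v) :
    (univ.filter fun a => (a ≠ v ↔ P) ∧ (b ≠ a ↔ Q) ∧ (a ≠ c ↔ R)).card
      = (univ.filter fun a => (a ≠ v ↔ P) ∧ (b' ≠ a ↔ Q) ∧ (a ≠ c' ↔ R)).card := by
  by_cases hP : P
  · by_cases hQ : Q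
    · by_cases hR : R
      · -- all inequalities required
        rw [Finset.filter_congr (q := fun a => a ≠ v ∧ b ≠ a ∧ a ≠ c)
            (fun a _ => by simp [hP, hQ, hR]),
          Finset.filter_congr (p := fun a => (a ≠ v ↔ P) ∧ (b' ≠ a ↔ Q) ∧ (a ≠ c' ↔ R)) (q := fun a => a ≠ v ∧ b' ≠ a ∧ a ≠ c')
            (fun a _ => by simp [hP, hQ, hR]),
          card_filter_not_mem_triple, card_filter_not_mem_triple,
          card_triple v b c b' c' h1 h2 h3]
      · -- a = c forced
        rw [Finset.filter_congr (q := fun a => a = c ∧ ((c ≠ v ↔ P) ∧ (b ≠ c ↔ Q)))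
            (fun a _ => by
              constructor
              · rintro ⟨ha1, ha2, ha3⟩
                have hac : a = c := not_not.mp (fun h => hR (ha3.mp h))
                subst hac; exact ⟨rfl, ha1, ha2⟩
              · rintro ⟨rfl, ha1, ha2⟩
                exact ⟨ha1, ha2, iff_of_false (by simp) hR⟩),
          Finset.filter_congr (p := fun a => (a ≠ v ↔ P) ∧ (b' ≠ a ↔ Q) ∧ (a ≠ c' ↔ R)) (q := fun a => a = c' ∧ ((c' ≠ v ↔ P) ∧ (b' ≠ c' ↔ Q)))
            (fun a _ => by
              constructor
              · rintro ⟨ha1, ha2, ha3⟩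
                have hac : a = c' := not_not.mp (fun h => hR (ha3.mp h))
                subst hac; exact ⟨rfl, ha1, ha2⟩
              · rintro ⟨rfl, ha1, ha2⟩
                exact ⟨ha1, ha2, iff_of_false (by simp) hR⟩),
          card_filter_eq_and, card_filter_eq_and]
        exact if_congr (and_congr (iff_congr h3 Iff.rfl) (iff_congr h2 Iff.rfl)) rfl rfl
    · -- a = b forced
      rw [Finset.filter_congr (q := fun a => a = b ∧ ((b ≠ v ↔ P) ∧ (b ≠ c ↔ R)))
          (fun a _ => by
            constructor
            · rintro ⟨ha1, ha2, ha3⟩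
              have hab : b = a := not_not.mp (fun h => hQ (ha2.mp h))
              subst hab; exact ⟨rfl, ha1, ha3⟩
            · rintro ⟨rfl, ha1, ha3⟩
              exact ⟨ha1, iff_of_false (by simp) hQ, ha3⟩),
        Finset.filter_congr (p := fun a => (a ≠ v ↔ P) ∧ (b' ≠ a ↔ Q) ∧ (a ≠ c' ↔ R)) (q := fun a => a = b' ∧ ((b' ≠ v ↔ P) ∧ (b' ≠ c' ↔ R)))
          (fun a _ => by
            constructor
            · rintro ⟨ha1, ha2, ha3⟩
              have hab : b' = a := not_not.mp (fun h => hQ (ha2.mp h))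
              subst hab; exact ⟨rfl, ha1, ha3⟩
            · rintro ⟨rfl, ha1, ha3⟩
              exact ⟨ha1, iff_of_false (by simp) hQ, ha3⟩),
        card_filter_eq_and, card_filter_eq_and]
      exact if_congr (and_congr (iff_congr h1 Iff.rfl) (iff_congr h2 Iff.rfl)) rfl rfl
  · -- a = v forced
    rw [Finset.filter_congr (q := fun a => a = v ∧ ((b ≠ v ↔ Q) ∧ (v ≠ c ↔ R)))
        (fun a _ => by
          constructor
          · rintro ⟨ha1, ha2, ha3⟩
            have hav : a = v := not_not.mp (fun h => hP (ha1.mp h))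
            subst hav; exact ⟨rfl, ha2, ha3⟩
          · rintro ⟨rfl, ha2, ha3⟩
            exact ⟨iff_of_false (by simp) hP, ha2, ha3⟩),
      Finset.filter_congr (p := fun a => (a ≠ v ↔ P) ∧ (b' ≠ a ↔ Q) ∧ (a ≠ c' ↔ R)) (q := fun a => a = v ∧ ((b' ≠ v ↔ Q) ∧ (v ≠ c' ↔ R)))
        (fun a _ => by
          constructor
          · rintro ⟨ha1, ha2, ha3⟩
            have hav : a = v := not_not.mp (fun h => hP (ha1.mp h))
            subst hav; exact ⟨rfl, ha2, ha3⟩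
          · rintro ⟨rfl, ha2, ha3⟩
            exact ⟨iff_of_false (by simp) hP, ha2, ha3⟩),
      card_filter_eq_and, card_filter_eq_and]
    exact if_congr (and_congr (iff_congr h1 Iff.rfl)
      (iff_congr (ne_comm.trans (h3.trans ne_comm)) Iff.rfl)) rfl rfl

end Helpers

section Mul
variable {n : ℕ} {U : Fin n → Type*} [∀ i, Fintype (U i)] [∀ i, DecidableEq (U i)]
variable (F : Type*) [Field F] (x : ∀ i, U i)

lemma ite_one_zero_mul (P Q : Prop) [Decidable P] [Decidable Q] :
    (if P then (1:F) else 0) * (if Q then 1 else 0) = if P ∧ Q then 1 else 0 := by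
  by_cases hP : P <;> by_cases hQ : Q <;> simp [hP, hQ]

noncomputable def coefC (S₂ S₃ T₂ S₁ Q T₃ : Finset (Fin n)) : F :=
  if hex : ∃ p : (∀ i, U i) × (∀ i, U i),
      Dst x p.1 = S₁ ∧ Dst p.1 p.2 = Q ∧ Dst x p.2 = T₃ then
    ∏ i, ((univ.filter fun a => (a ≠ x i ↔ i ∈ S₃) ∧ (hex.choose.1 i ≠ a ↔ i ∈ S₂) ∧
      (a ≠ hex.choose.2 i ↔ i ∈ T₂)).card : F)
  else 0

lemma Bm_mul_eq (S₁ S₂ S₃ T₂ T₃ : Finset (Fin n)) :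
    Bm F x (S₁, S₂, S₃) * Bm F x (S₃, T₂, T₃)
      = ∑ Q : Finset (Fin n), (coefC F x S₂ S₃ T₂ S₁ Q T₃) • Bm F x (S₁, Q, T₃) := by
  ext y w
  rw [Matrix.mul_apply, Matrix.sum_apply]
  simp only [Matrix.smul_apply, Bm, smul_eq_mul]
  by_cases hyw : Dst x y = S₁ ∧ Dst x w = T₃
  · -- RHS = coefC at Q = Dst y w
    rw [Finset.sum_eq_single (Dst y w)]
    · rw [if_pos ⟨hyw.1, rfl, hyw.2⟩, mul_one]
      -- LHS computation
      have hcond : ∀ z : (∀ i, U i),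
          ((Dst x y = S₁ ∧ Dst y z = S₂ ∧ Dst x z = S₃) ∧
            (Dst x z = S₃ ∧ Dst z w = T₂ ∧ Dst x w = T₃))
          ↔ ∀ i, ((z i ≠ x i ↔ i ∈ S₃) ∧ (y i ≠ z i ↔ i ∈ S₂) ∧ (z i ≠ w i ↔ i ∈ T₂)) := by
        intro z
        constructor
        · rintro ⟨⟨-, h2, h3⟩, ⟨-, h5, -⟩⟩ i
          exact ⟨ne_comm.trans ((Dst_eq_iff x z S₃).mp h3 i),
            (Dst_eq_iff y z S₂).mp h2 i, (Dst_eq_iff z w T₂).mp h5 i⟩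
        · intro h
          have h3 : Dst x z = S₃ := (Dst_eq_iff x z S₃).mpr fun i => ne_comm.trans (h i).1
          exact ⟨⟨hyw.1, (Dst_eq_iff y z S₂).mpr fun i => (h i).2.1, h3⟩,
            ⟨h3, (Dst_eq_iff z w T₂).mpr fun i => (h i).2.2, hyw.2⟩⟩
      calc ∑ z : (∀ i, U i), (if Dst x y = S₁ ∧ Dst y z = S₂ ∧ Dst x z = S₃ then (1:F) else 0) *
              (if Dst x z = S₃ ∧ Dst z w = T₂ ∧ Dst x w = T₃ then 1 else 0)
          = ∑ z : (∀ i, U i), ∏ i, (if (z i ≠ x i ↔ i ∈ S₃) ∧ (y i ≠ z i ↔ i ∈ S₂) ∧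
              (z i ≠ w i ↔ i ∈ T₂) then (1:F) else 0) := by
            refine Finset.sum_congr rfl fun z _ => ?_
            rw [ite_one_zero_mul]
            simp only [Finset.prod_boole]
            by_cases hz : (Dst x y = S₁ ∧ Dst y z = S₂ ∧ Dst x z = S₃) ∧
              Dst x z = S₃ ∧ Dst z w = T₂ ∧ Dst x w = T₃
            · rw [if_pos hz, if_pos (by simpa using (hcond z).mp hz)]
            · rw [if_neg hz, if_neg (fun h => hz ((hcond z).mpr (by simpa using h)))]
        _ = ∏ i, ∑ a : U i, (if (a ≠ x i ↔ i ∈ S₃) ∧ (y i ≠ a ↔ i ∈ S₂) ∧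
              (a ≠ w i ↔ i ∈ T₂) then (1:F) else 0) := by
            rw [Finset.prod_univ_sum (fun _ => univ), Fintype.piFinset_univ]
        _ = ∏ i, ((univ.filter fun a => (a ≠ x i ↔ i ∈ S₃) ∧ (y i ≠ a ↔ i ∈ S₂) ∧
              (a ≠ w i ↔ i ∈ T₂)).card : F) := by
            refine Finset.prod_congr rfl fun i _ => ?_
            rw [Finset.sum_boole]
        _ = coefC F x S₂ S₃ T₂ S₁ (Dst y w) T₃ := by
            have hex : ∃ p : (∀ i, U i) × (∀ i, U i),
                Dst x p.1 = S₁ ∧ Dst p.1 p.2 = Dst y w ∧ Dst x p.2 = T₃ :=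
              ⟨(y, w), hyw.1, rfl, hyw.2⟩
            rw [coefC, dif_pos hex]
            refine Finset.prod_congr rfl fun i _ => ?_
            congr 1
            obtain ⟨hc1, hc2, hc3⟩ := hex.choose_spec
            refine cnt_invar (x i) (i ∈ S₃) (i ∈ S₂) (i ∈ T₂) ?_ ?_ ?_
            · exact ((ne_comm.trans ((Dst_eq_iff x y S₁).mp hyw.1 i)).trans
                ((Dst_eq_iff x _ S₁).mp hc1 i).symm).trans ne_comm
            · exact (((Dst_eq_iff y w _).mp rfl i).trans
                ((Dst_eq_iff _ _ _).mp hc2 i).symm)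
            · exact ((ne_comm.trans ((Dst_eq_iff x w T₃).mp hyw.2 i)).trans
                ((Dst_eq_iff x _ T₃).mp hc3 i).symm).trans ne_comm
    · intro Q _ hQ
      rw [if_neg, mul_zero]
      rintro ⟨-, h2, -⟩
      exact hQ h2.symm
    · simp
  · -- both sides zero
    rw [Finset.sum_eq_zero, Finset.sum_eq_zero]
    · intro Q _
      rw [if_neg, mul_zero]
      rintro ⟨h1, -, h3⟩
      exact hyw ⟨h1, h3⟩
    · intro z _
      rw [ite_one_zero_mul, if_neg]
      rintro ⟨⟨h1, -, -⟩, ⟨-, -, h3⟩⟩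
      exact hyw ⟨h1, h3⟩

lemma Bm_mul_zero_of_ne {S₃ T₁ : Finset (Fin n)} (h : S₃ ≠ T₁) (S₁ S₂ T₂ T₃ : Finset (Fin n)) :
    Bm F x (S₁, S₂, S₃) * Bm F x (T₁, T₂, T₃) = 0 := by
  ext y w
  rw [Matrix.mul_apply]
  refine Finset.sum_eq_zero fun z _ => ?_
  simp only [Bm, ite_one_zero_mul, Matrix.zero_apply]
  rw [if_neg]
  rintro ⟨⟨-, -, h3⟩, ⟨h4, -, -⟩⟩
  exact h (h3.symm.trans h4)

lemma Bm_mul_mem (t t' : TT n) : Bm F x t * Bm F x t' ∈ Wspan F x := by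
  obtain ⟨S₁, S₂, S₃⟩ := t
  obtain ⟨T₁, T₂, T₃⟩ := t'
  by_cases h : S₃ = T₁
  · subst h
    rw [Bm_mul_eq]
    exact Submodule.sum_mem _ fun Q _ => Submodule.smul_mem _ _ (Bm_mem F x _)
  · rw [Bm_mul_zero_of_ne F x h]
    exact (Wspan F x).zero_mem

end Mul

section Alg
variable {n : ℕ} {U : Fin n → Type*} [∀ i, Fintype (U i)] [∀ i, DecidableEq (U i)]
variable (F : Type*) [Field F] (x : ∀ i, U i)

lemma Wspan_mul_mem {a b : Matrix (∀ i, U i) (∀ i, U i) F}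
    (ha : a ∈ Wspan F x) (hb : b ∈ Wspan F x) : a * b ∈ Wspan F x := by
  have h : Wspan F x * Wspan F x ≤ Wspan F x := by
    rw [Wspan, Submodule.span_mul_span]
    refine Submodule.span_le.mpr ?_
    rintro m ⟨a, ⟨t, rfl⟩, b, ⟨t', rfl⟩, rfl⟩
    exact Bm_mul_mem F x t t'
  exact h (Submodule.mul_mem_mul ha hb)

def Wsub : Subalgebra F (Matrix (∀ i, U i) (∀ i, U i) F) :=
  (Wspan F x).toSubalgebra (one_mem_W F x) (fun a b ha hb => Wspan_mul_mem F x ha hb)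

lemma mem_Wsub_iff (m : Matrix (∀ i, U i) (∀ i, U i) F) : m ∈ Wsub F x ↔ m ∈ Wspan F x :=
  Iff.rfl

lemma TerwAlg_toSubmodule :
    Subalgebra.toSubmodule (TerwAlg F x) = Wspan F x := by
  apply le_antisymm
  · have h : TerwAlg F x ≤ Wsub F x := by
      refine Algebra.adjoin_le ?_
      rintro m (⟨S, rfl⟩ | ⟨S, rfl⟩)
      · exact adjMat_mem F x S
      · exact dualIdem_mem F x S
    exact fun m hm => h hm
  · refine Submodule.span_le.mpr ?_
    rintro m ⟨t, rfl⟩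
    rw [SetLike.mem_coe, Subalgebra.mem_toSubmodule, Bm_eq_mul]
    exact mul_mem (mul_mem (Algebra.subset_adjoin (Or.inr ⟨t.1, rfl⟩))
      (Algebra.subset_adjoin (Or.inl ⟨t.2.1, rfl⟩)))
      (Algebra.subset_adjoin (Or.inr ⟨t.2.2, rfl⟩))

lemma finrank_TerwAlg_eq :
    Module.finrank F ↥(TerwAlg F x) = Module.finrank F ↥(Wspan F x) := by
  rw [← TerwAlg_toSubmodule F x]
  rfl

end Alg

section Rank
variable {n : ℕ} {U : Fin n → Type*} [∀ i, Fintype (U i)] [∀ i, DecidableEq (U i)]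
variable (F : Type*) [Field F] (x : ∀ i, U i)

def validT : Finset (TT n) :=
  univ.filter fun t => ∃ y w : ∀ i, U i, Dst x y = t.1 ∧ Dst y w = t.2.1 ∧ Dst x w = t.2.2

lemma Bm_eq_zero_of_not_valid {t : TT n} (h : t ∉ validT x) : Bm F x t = 0 := by
  ext y w
  rw [Bm, Matrix.zero_apply, if_neg]
  rintro ⟨h1, h2, h3⟩
  exact h (mem_filter.mpr ⟨mem_univ _, y, w, h1, h2, h3⟩)

lemma Wspan_eq_span_valid :
    Wspan F x = Submodule.span F (Set.range fun t : (validT x : Finset (TT n)) => Bm F x t) := by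
  apply le_antisymm
  · refine Submodule.span_le.mpr ?_
    rintro m ⟨t, rfl⟩
    by_cases h : t ∈ validT x
    · exact Submodule.subset_span ⟨⟨t, h⟩, rfl⟩
    · rw [Bm_eq_zero_of_not_valid F x h]
      exact Submodule.zero_mem _
  · refine Submodule.span_le.mpr ?_
    rintro m ⟨t, rfl⟩
    exact Bm_mem F x t

lemma Bm_linearIndependent :
    LinearIndependent F (fun t : (validT x : Finset (TT n)) => Bm F x t) := by
  rw [Fintype.linearIndependent_iff]
  intro c hc t
  obtain ⟨y, w, h1, h2, h3⟩ := (mem_filter.mp t.2).2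
  have hev := congrFun (congrFun hc y) w
  simp only [Matrix.sum_apply, Matrix.smul_apply, Matrix.zero_apply, smul_eq_mul] at hev
  rw [Finset.sum_eq_single t] at hev
  · rw [Bm, if_pos ⟨h1, h2, h3⟩, mul_one] at hev
    exact hev
  · intro t' _ ht'
    rw [Bm, if_neg, mul_zero]
    rintro ⟨g1, g2, g3⟩
    apply ht'
    exact Subtype.ext (Prod.ext_iff.mpr ⟨g1.symm.trans h1,
      Prod.ext_iff.mpr ⟨g2.symm.trans h2, g3.symm.trans h3⟩⟩)
  · intro h
    exact absurd (mem_univ t) h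

lemma finrank_Wspan : Module.finrank F ↥(Wspan F x) = (validT x).card := by
  rw [Wspan_eq_span_valid, finrank_span_eq_card (Bm_linearIndependent F x),
    Fintype.card_coe]

end Rank

section Count
variable {α : Type*} [Fintype α] [DecidableEq α]

lemma card_patterns (v : α) (h2 : 2 ≤ Fintype.card α) :
    (univ.filter fun pat : Bool × Bool × Bool =>
        ∃ b c : α, pat = (decide (b ≠ v), decide (b ≠ c), decide (c ≠ v))).card
      = if 2 < Fintype.card α then 5 else 4 := by
  have hnt : Nontrivial α := Fintype.one_lt_card_iff_nontrivial.mp h2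
  obtain ⟨e, he⟩ := exists_ne v
  by_cases h3 : 2 < Fintype.card α
  · rw [if_pos h3]
    have hset : (univ.filter fun pat : Bool × Bool × Bool =>
        ∃ b c : α, pat = (decide (b ≠ v), decide (b ≠ c), decide (c ≠ v)))
        = {(false,false,false),(false,true,true),(true,true,false),(true,false,true),
            (true,true,true)} := by
      ext pat
      simp only [mem_filter, mem_univ, true_and, mem_insert, mem_singleton]
      constructor
      · rintro ⟨b, c, rfl⟩
        by_cases hbv : b = v <;> by_cases hcv : c = v <;> by_cases hbc : b = c <;>
          simp [hbv, hcv, hbc] <;> tauto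
      · rintro (rfl | rfl | rfl | rfl | rfl)
        · exact ⟨v, v, by simp⟩
        · exact ⟨v, e, by simp [he, Ne.symm he]⟩
        · exact ⟨e, v, by simp [he]⟩
        · exact ⟨e, e, by simp [he]⟩
        · -- need two distinct elements both ≠ v
          have hc : 1 < ({v}ᶜ : Finset α).card := by
            rw [Finset.card_compl, Finset.card_singleton]
            omega
          obtain ⟨b, hb, c, hcmem, hbc⟩ := Finset.one_lt_card.mp hc
          rw [Finset.mem_compl, Finset.mem_singleton] at hb hcmem
          exact ⟨b, c, by simp [hb, hcmem, hbc]⟩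
    rw [hset]
    rfl
  · rw [if_neg h3]
    have hset : (univ.filter fun pat : Bool × Bool × Bool =>
        ∃ b c : α, pat = (decide (b ≠ v), decide (b ≠ c), decide (c ≠ v)))
        = {(false,false,false),(false,true,true),(true,true,false),(true,false,true)} := by
      ext pat
      simp only [mem_filter, mem_univ, true_and, mem_insert, mem_singleton]
      constructor
      · rintro ⟨b, c, rfl⟩
        by_cases hbv : b = v <;> by_cases hcv : c = v <;> by_cases hbc : b = c
        · simp [hbv, hcv, hbc]
        · exact absurd (hbv.trans hcv.symm) hbc
        · exact absurd (hbc.symm.trans hbv) hcv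
        · simp [hbv, hcv, hbc]; exact fun h => hcv h.symm
        · simp [hbv, hcv, hbc]
        · simp [hbv, hcv, hbc]
        · simp [hbv, hcv, hbc]
        · -- three distinct elements: contradiction with card ≤ 2
          exfalso
          have hcard : ({v, b, c} : Finset α).card ≤ Fintype.card α :=
            Finset.card_le_univ _
          rw [Finset.card_insert_of_notMem (by simp [Ne.symm hbv, Ne.symm hcv]),
            Finset.card_insert_of_notMem (by simp [hbc]), Finset.card_singleton] at hcard
          omega
      · rintro (rfl | rfl | rfl | rfl)
        · exact ⟨v, v, by simp⟩
        · exact ⟨v, e, by simp [he, Ne.symm he]⟩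
        · exact ⟨e, v, by simp [he]⟩
        · exact ⟨e, e, by simp [he]⟩
    rw [hset]
    rfl

end Count

section Count2
variable {n : ℕ} {U : Fin n → Type*} [∀ i, Fintype (U i)] [∀ i, DecidableEq (U i)]
variable (x : ∀ i, U i)

def allowed (i : Fin n) : Finset (Bool × Bool × Bool) :=
  univ.filter fun pat =>
    ∃ b c : U i, pat = (decide (b ≠ x i), decide (b ≠ c), decide (c ≠ x i))

lemma card_validT : (validT x).card = ∏ i, (allowed x i).card := by
  rw [← Fintype.card_piFinset]
  refine Finset.card_nbij
    (fun t i => (decide (i ∈ t.1), decide (i ∈ t.2.1), decide (i ∈ t.2.2))) ?_ ?_ ?_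
  · rintro t ht
    rw [Finset.mem_coe, Fintype.mem_piFinset]
    obtain ⟨y, w, h1, h2, h3⟩ := (mem_filter.mp ht).2
    intro i
    refine mem_filter.mpr ⟨mem_univ _, y i, w i, ?_⟩
    have e1 : (i ∈ t.1) ↔ (y i ≠ x i) := by rw [← h1, mem_Dst]; exact ne_comm
    have e2 : (i ∈ t.2.1) ↔ (y i ≠ w i) := by rw [← h2, mem_Dst]
    have e3 : (i ∈ t.2.2) ↔ (w i ≠ x i) := by rw [← h3, mem_Dst]; exact ne_comm
    show (decide (i ∈ t.1), decide (i ∈ t.2.1), decide (i ∈ t.2.2)) = _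
    rw [decide_eq_decide.mpr e1, decide_eq_decide.mpr e2, decide_eq_decide.mpr e3]
  · intro t _ t' _ hΦ
    have key : ∀ (S S' : Finset (Fin n)), (∀ i, decide (i ∈ S) = decide (i ∈ S')) → S = S' :=
      fun S S' h => Finset.ext fun i => decide_eq_decide.mp (h i)
    have h1 := fun i => congrArg Prod.fst (congrFun hΦ i)
    have h2 := fun i => congrArg (fun p => p.2.1) (congrFun hΦ i)
    have h3 := fun i => congrArg (fun p => p.2.2) (congrFun hΦ i)
    exact Prod.ext_iff.mpr ⟨key _ _ h1, Prod.ext_iff.mpr ⟨key _ _ h2, key _ _ h3⟩⟩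
  · rintro f hf
    rw [Finset.mem_coe, Fintype.mem_piFinset] at hf
    have spec : ∀ i, ∃ b c : U i,
        f i = (decide (b ≠ x i), decide (b ≠ c), decide (c ≠ x i)) :=
      fun i => (mem_filter.mp (hf i)).2
    choose y w hyw using spec
    refine ⟨(univ.filter fun i => (f i).1 = true,
             univ.filter fun i => (f i).2.1 = true,
             univ.filter fun i => (f i).2.2 = true), ?_, ?_⟩
    · rw [Finset.mem_coe, validT, mem_filter]
      refine ⟨mem_univ _, y, w, ?_, ?_, ?_⟩
      · ext i
        rw [mem_Dst, mem_filter]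
        have : (f i).1 = decide (y i ≠ x i) := by rw [hyw i]
        rw [this]
        simp [ne_comm]
      · ext i
        rw [mem_Dst, mem_filter]
        have : (f i).2.1 = decide (y i ≠ w i) := by rw [hyw i]
        rw [this]
        simp
      · ext i
        rw [mem_Dst, mem_filter]
        have : (f i).2.2 = decide (w i ≠ x i) := by rw [hyw i]
        rw [this]
        simp [ne_comm]
    · funext i
      simp only [mem_filter, mem_univ, true_and]
      have hb : ∀ b : Bool, decide (b = true) = b := by decide
      rw [hb, hb, hb]

end Count2

section Arith

lemma inner_choose_pow (g : ℕ) : ∑ i ∈ Finset.range (g + 1), g.choose i * 2 ^ i = 3 ^ g := by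
  have := add_pow 2 1 g (R := ℕ)
  simp only [one_pow, mul_one] at this
  calc ∑ i ∈ Finset.range (g + 1), g.choose i * 2 ^ i
      = ∑ i ∈ Finset.range (g + 1), 2 ^ i * g.choose i := by
        exact Finset.sum_congr rfl fun i _ => Nat.mul_comm _ _
    _ = (2 + 1) ^ g := this.symm
    _ = 3 ^ g := by norm_num

lemma five_pow (k : ℕ) :
    ∑ g ∈ Finset.range (k + 1), k.choose g * 2 ^ (k - g) * 3 ^ g = 5 ^ k := by
  have := add_pow 3 2 k (R := ℕ)
  calc ∑ g ∈ Finset.range (k + 1), k.choose g * 2 ^ (k - g) * 3 ^ g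
      = ∑ g ∈ Finset.range (k + 1), 3 ^ g * 2 ^ (k - g) * k.choose g := by
        exact Finset.sum_congr rfl fun g _ => by ring
    _ = (3 + 2) ^ k := this.symm
    _ = 5 ^ k := by norm_num

lemma four_pow (m : ℕ) :
    ∑ h ∈ Finset.range (m + 1), m.choose h * 2 ^ (m - h) * 2 ^ h = 4 ^ m := by
  calc ∑ h ∈ Finset.range (m + 1), m.choose h * 2 ^ (m - h) * 2 ^ h
      = ∑ h ∈ Finset.range (m + 1), m.choose h * 2 ^ m := by
        refine Finset.sum_congr rfl fun h hh => ?_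
        rw [Finset.mem_range] at hh
        rw [mul_assoc, ← pow_add]
        congr 2
        omega
    _ = (∑ h ∈ Finset.range (m + 1), m.choose h) * 2 ^ m := by
        rw [Finset.sum_mul]
    _ = 2 ^ m * 2 ^ m := by rw [Nat.sum_range_choose]
    _ = 4 ^ m := by rw [← Nat.mul_pow]
end Arith

lemma sum_identity (n n₂ : ℕ) (hle : n₂ ≤ n) :
    ∑ g ∈ Finset.range (n₂ + 1), ∑ h ∈ Finset.range (n - n₂ + 1),
      ∑ i ∈ Finset.range (g + 1), ∑ j ∈ Finset.range (h + 1),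
        n₂.choose g * (n - n₂).choose h * g.choose i * h.choose j * 2 ^ (n - g - h + i)
    = 5 ^ n₂ * 4 ^ (n - n₂) := by
  set m := n - n₂ with hm
  have step : ∀ g ∈ Finset.range (n₂ + 1), ∀ h ∈ Finset.range (m + 1),
      ∀ i ∈ Finset.range (g + 1), ∀ j ∈ Finset.range (h + 1),
      n₂.choose g * m.choose h * g.choose i * h.choose j * 2 ^ (n - g - h + i)
        = (n₂.choose g * 2 ^ (n₂ - g) * (g.choose i * 2 ^ i)) *
          (m.choose h * 2 ^ (m - h) * h.choose j) := by
    intro g hg h hh i _ j _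
    rw [Finset.mem_range] at hg hh
    have hexp : n - g - h + i = (n₂ - g) + ((m - h) + i) := by omega
    rw [hexp, pow_add, pow_add]
    ring
  calc ∑ g ∈ Finset.range (n₂ + 1), ∑ h ∈ Finset.range (m + 1),
      ∑ i ∈ Finset.range (g + 1), ∑ j ∈ Finset.range (h + 1),
        n₂.choose g * m.choose h * g.choose i * h.choose j * 2 ^ (n - g - h + i)
      = ∑ g ∈ Finset.range (n₂ + 1), ∑ h ∈ Finset.range (m + 1),
        ∑ i ∈ Finset.range (g + 1), ∑ j ∈ Finset.range (h + 1),
          (n₂.choose g * 2 ^ (n₂ - g) * (g.choose i * 2 ^ i)) *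
          (m.choose h * 2 ^ (m - h) * h.choose j) := by
        refine Finset.sum_congr rfl fun g hg => Finset.sum_congr rfl fun h hh =>
          Finset.sum_congr rfl fun i hi => Finset.sum_congr rfl fun j hj => ?_
        exact step g hg h hh i hi j hj
    _ = (∑ g ∈ Finset.range (n₂ + 1), ∑ i ∈ Finset.range (g + 1),
          n₂.choose g * 2 ^ (n₂ - g) * (g.choose i * 2 ^ i)) *
        (∑ h ∈ Finset.range (m + 1), ∑ j ∈ Finset.range (h + 1),
          m.choose h * 2 ^ (m - h) * h.choose j) := by
        rw [Finset.sum_mul]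
        refine Finset.sum_congr rfl fun g _ => ?_
        rw [Finset.mul_sum]
        refine Finset.sum_congr rfl fun h _ => ?_
        rw [Finset.sum_mul_sum]
    _ = 5 ^ n₂ * 4 ^ m := by
        have f1 : (∑ g ∈ Finset.range (n₂ + 1), ∑ i ∈ Finset.range (g + 1),
            n₂.choose g * 2 ^ (n₂ - g) * (g.choose i * 2 ^ i)) = 5 ^ n₂ := by
          rw [← five_pow n₂]
          refine Finset.sum_congr rfl fun g _ => ?_
          rw [← Finset.mul_sum, inner_choose_pow]
        have f2 : (∑ h ∈ Finset.range (m + 1), ∑ j ∈ Finset.range (h + 1),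
            m.choose h * 2 ^ (m - h) * h.choose j) = 4 ^ m := by
          rw [← four_pow m]
          refine Finset.sum_congr rfl fun h _ => ?_
          rw [← Finset.mul_sum, Nat.sum_range_choose]
        rw [f1, f2]


theorem stmt_11 (hn : 1 ≤ n) (u : Fin n → ℕ) (hu : ∀ i, Fintype.card (U i) = u i)
    (h2 : ∀ i, 2 ≤ u i) (x : ∀ i, U i)
    (n₂ : ℕ) (hn2 : n₂ = ((univ : Finset (Fin n)).filter (fun x => 2 < u x)).card) :
    Module.finrank F ↥(TerwAlg F x)
      = ∑ g ∈ Finset.range (n₂ + 1), ∑ h ∈ Finset.range (n - n₂ + 1),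
          ∑ i ∈ Finset.range (g + 1), ∑ j ∈ Finset.range (h + 1),
            n₂.choose g * (n - n₂).choose h * g.choose i * h.choose j *
              2 ^ (n - g - h + i) := by
  have hle : n₂ ≤ n := by
    rw [hn2]
    exact le_trans (Finset.card_filter_le _ _) (by simp)
  rw [finrank_TerwAlg_eq F x, finrank_Wspan F x, card_validT x, sum_identity n n₂ hle]
  have hcard : ∀ i, (allowed x i).card = if 2 < u i then 5 else 4 := by
    intro i
    rw [allowed, card_patterns (x i) (by rw [hu i]; exact h2 i), hu i]
  calc ∏ i, (allowed x i).card
      = ∏ i, (if 2 < u i then 5 else 4) := Finset.prod_congr rfl fun i _ => hcard i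
    _ = 5 ^ n₂ * 4 ^ (n - n₂) := by
        rw [Finset.prod_ite (f := fun _ => 5) (g := fun _ => 4), Finset.prod_const, Finset.prod_const]
        have hsplit := Finset.card_filter_add_card_filter_not (s := (univ : Finset (Fin n))) (p := fun i => 2 < u i)
        rw [Finset.card_univ, Fintype.card_fin] at hsplit
        have e1 : ((univ : Finset (Fin n)).filter (fun i => 2 < u i)).card = n₂ := hn2.symm
        have e2 : ((univ : Finset (Fin n)).filter (fun i => ¬ 2 < u i)).card = n - n₂ := by
          omega
        rw [e1, e2]
end
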